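/- If 0 < −α < −β − 1, and moreover −β − 1 ≤ −2α and β − α > −2 (equivalently −a ≥ a − b − c and −b − c < −a + c), then the vector −(2a − c, 2c)ᵀ is a periodic point of Φ, i.e., −(2a − c, 2c)ᵀ ∈ 𝒜_Φ. -/

import Mathlib

open Matrix Polynomial

noncomputable section

/-- `ℤ²[A]`: the smallest `A`-invariant `ℤ`-module containing `ℤ²`. -/
def intSpan {n : ℕ} (A : Matrix (Fin n) (Fin n) ℚ) : Set (Fin n → ℚ) :=
  {x | ∃ (k : ℕ) (v : ℕ → Fin n → ℤ),
    x = ∑ j ∈ Finset.range (k + 1), (A ^ j).mulVec (fun i => ((v j i : ℚ)))}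

/-- The digit vector `(ν, 0)ᵀ`. -/
def digitVec (ν : ℤ) : Fin 2 → ℚ := ![(ν : ℚ), 0]

/-! Identify `ℚ²` with `ℚ(θ)`, `θ` a root of `p`, via `e₁ ↦ 1`: then `A` is multiplication by `θ`
and `ℤ²[A] = ℤ[θ]`. If `ν + θ y = ν' + θ y'` with `y, y' ∈ ℤ[θ]`, then `θ f(θ) = ν' - ν` for some
`f ∈ ℤ[X]`, so `p ∣ X f - (ν' - ν)` and, by Gauss's lemma, the primitive polynomial `q = c p`
divides it over `ℤ`. Comparing constant terms, `b ∣ ν' - ν`; hence digits in `[0, |b|)` agree,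
and `y = y'`. So `Φ x = y` as soon as `x = (ν, 0) + A y` with an admissible digit `ν`, and the
expansions `x₀ = (b + c - 2a, 0) + A x₁`, `x₁ = (a - 2b - 2c, 0) + A x₀` with `x₁ = (a - 2c, c)`
exhibit a cycle of length two. -/

theorem digitVec_sub (μ ν : ℤ) : digitVec (μ - ν) = digitVec μ - digitVec ν := by
  ext i; fin_cases i <;> simp [digitVec]

def companion (α β : ℚ) : Matrix (Fin 2) (Fin 2) ℚ := !![0, -β; 1, -α]

section Companion

variable (α β : ℚ)

theorem companion_mulVec (x : Fin 2 → ℚ) :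
    companion α β *ᵥ x = ![-β * x 1, x 0 - α * x 1] := by
  ext i
  fin_cases i
  · simp [companion, mulVec, dotProduct, Fin.sum_univ_two]
  · simp [companion, mulVec, dotProduct, Fin.sum_univ_two]; ring

theorem det_companion : (companion α β).det = β := by
  simp [companion, det_fin_two_of]

theorem companion_mulVec_injective (hβ : β ≠ 0) : Function.Injective (companion α β).mulVec :=
  mulVec_injective_iff_isUnit.mpr <| (isUnit_iff_isUnit_det _).mpr <| by
    rw [det_companion]; exact hβ.isUnit

theorem charpoly_companion : (companion α β).charpoly = X ^ 2 + C α * X + C β := by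
  rw [charpoly_fin_two, det_companion]
  simp [companion, trace_fin_two, sub_eq_add_neg]

theorem aeval_companion_linear_mulVec {R : Type*} [CommRing R] [Algebra R ℚ] (r s : R) :
    aeval (companion α β) (C r + C s * X) *ᵥ ![1, 0] = ![algebraMap R ℚ r, algebraMap R ℚ s] := by
  ext i
  fin_cases i <;>
    simp [companion, Algebra.algebraMap_eq_smul_one, mulVec, dotProduct, Fin.sum_univ_two]

theorem charpoly_companion_dvd_of_aeval_mulVec_eq_zero {f : ℚ[X]}
    (hf : aeval (companion α β) f *ᵥ ![1, 0] = 0) : (companion α β).charpoly ∣ f := by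
  set A := companion α β
  have hmonic : A.charpoly.Monic := charpoly_monic A
  rw [← modByMonic_eq_zero_iff_dvd hmonic]
  have hdeg : (f %ₘ A.charpoly).degree ≤ 1 := by
    have := degree_modByMonic_lt f hmonic
    rw [charpoly_degree_eq_dim, Fintype.card_fin] at this
    exact Order.le_of_lt_succ this
  have hrem := eq_X_add_C_of_degree_le_one hdeg
  rw [← aeval_modByMonic_eq_self_of_root (aeval_self_charpoly A), hrem, add_comm,
    aeval_companion_linear_mulVec] at hf
  have h0 : (f %ₘ A.charpoly).coeff 0 = 0 := by simpa using congrFun hf 0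
  have h1 : (f %ₘ A.charpoly).coeff 1 = 0 := by simpa using congrFun hf 1
  rw [hrem, h0, h1, C_0, zero_mul, add_zero]

theorem exists_aeval_mulVec_of_mem_intSpan {x : Fin 2 → ℚ} (hx : x ∈ intSpan (companion α β)) :
    ∃ f : ℤ[X], aeval (companion α β) f *ᵥ ![1, 0] = x := by
  obtain ⟨k, v, rfl⟩ := hx
  refine ⟨∑ j ∈ Finset.range (k + 1), X ^ j * (C (v j 0) + C (v j 1) * X), ?_⟩
  rw [map_sum, sum_mulVec]
  refine Finset.sum_congr rfl fun j _ => ?_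
  rw [map_mul, map_pow, aeval_X, ← mulVec_mulVec, aeval_companion_linear_mulVec]
  congr 1
  ext i; fin_cases i <;> rfl

theorem coeff_zero_dvd_of_companion_mulVec_eq_digitVec {q : ℤ[X]} (hq : q.IsPrimitive)
    (hqp : Associated (q.map (Int.castRingHom ℚ)) (companion α β).charpoly) (f : ℤ[X]) (m : ℤ)
    (h : companion α β *ᵥ (aeval (companion α β) f *ᵥ ![1, 0]) = digitVec m) :
    q.coeff 0 ∣ m := by
  set A := companion α β
  have hF : aeval A (X * f - C m) *ᵥ ![1, 0] = 0 := by
    rw [map_sub, map_mul, aeval_X, sub_mulVec, ← mulVec_mulVec, h, aeval_C]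
    ext i; fin_cases i <;> simp [digitVec]
  rw [← aeval_map_algebraMap ℚ, algebraMap_int_eq] at hF
  have hdvd : q ∣ X * f - C m := by
    rw [IsPrimitive.Int.dvd_iff_map_cast_dvd_map_cast _ _ hq]
    exact hqp.dvd.trans (charpoly_companion_dvd_of_aeval_mulVec_eq_zero α β hF)
  obtain ⟨g, hg⟩ := hdvd
  have hcoeff := congrArg (coeff · 0) hg
  simp only [coeff_sub, mul_coeff_zero, coeff_X_zero, zero_mul, coeff_C_zero] at hcoeff
  exact ⟨-g.coeff 0, by linarith⟩

theorem eq_of_digitVec_add_companion_mulVec_eq (hβ : β ≠ 0) {q : ℤ[X]} (hq : q.IsPrimitive)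
    (hqp : Associated (q.map (Int.castRingHom ℚ)) (companion α β).charpoly)
    {ν ν' : ℤ} (hν : 0 ≤ ν ∧ ν < |q.coeff 0|) (hν' : 0 ≤ ν' ∧ ν' < |q.coeff 0|)
    {y y' : Fin 2 → ℚ} (hy : y ∈ intSpan (companion α β)) (hy' : y' ∈ intSpan (companion α β))
    (h : digitVec ν + companion α β *ᵥ y = digitVec ν' + companion α β *ᵥ y') : y = y' := by
  obtain ⟨f, rfl⟩ := exists_aeval_mulVec_of_mem_intSpan α β hy
  obtain ⟨f', rfl⟩ := exists_aeval_mulVec_of_mem_intSpan α β hy'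
  have hdiff : companion α β *ᵥ (aeval (companion α β) (f - f') *ᵥ ![1, 0]) =
      digitVec (ν' - ν) := by
    rw [map_sub, sub_mulVec, mulVec_sub, digitVec_sub]
    linear_combination h
  have hdvd := coeff_zero_dvd_of_companion_mulVec_eq_digitVec α β hq hqp _ _ hdiff
  have hνν' : ν' - ν = 0 :=
    Int.eq_zero_of_abs_lt_dvd ((abs_dvd _ _).mpr hdvd) (by rw [abs_lt]; constructor <;> linarith)
  rw [sub_eq_zero.mp hνν', add_right_inj] at h
  exact companion_mulVec_injective α β hβ h

end Companion

theorem vecCons_intCast_mem_intSpan (A : Matrix (Fin 2) (Fin 2) ℚ) (u v : ℤ) :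
    ![(u : ℚ), (v : ℚ)] ∈ intSpan A :=
  ⟨0, fun _ => ![u, v], by ext i; fin_cases i <;> simp⟩

theorem isPrimitive_of_gcd_eq_one {a b c : ℤ} (h : Int.gcd c (Int.gcd a b) = 1) :
    (C c * X ^ 2 + C a * X + C b).IsPrimitive := by
  intro r hr
  rw [C_dvd_iff_dvd_coeff] at hr
  have hc := hr 2
  have ha := hr 1
  have hb := hr 0
  simp only [coeff_add, coeff_C_mul_X_pow, coeff_C_mul_X, coeff_C] at hc ha hb
  norm_num at hc ha hb
  apply isUnit_of_dvd_one
  have := Int.dvd_coe_gcd hc (Int.dvd_coe_gcd ha hb)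
  rwa [h, Nat.cast_one] at this

theorem associated_map_charpoly_companion {α β : ℚ} {a b c : ℤ} (hc : c ≠ 0)
    (ha : (a : ℚ) = c * α) (hb : (b : ℚ) = c * β) :
    Associated ((C c * X ^ 2 + C a * X + C b).map (Int.castRingHom ℚ))
      (companion α β).charpoly := by
  have hmap : (C c * X ^ 2 + C a * X + C b).map (Int.castRingHom ℚ) =
      C (c : ℚ) * (X ^ 2 + C α * X + C β) := by
    simp only [Polynomial.map_add, Polynomial.map_mul, Polynomial.map_pow, Polynomial.map_C,
      Polynomial.map_X, Int.coe_castRingHom, ha, hb, C_mul]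
    ring
  rw [hmap, charpoly_companion]
  exact associated_unit_mul_left _ _ (isUnit_C.mpr (Int.cast_ne_zero.mpr hc).isUnit)

theorem stmt8_general (α β : ℚ) (hα2 : -α < -β - 1)
    (hcond1 : -β - 1 ≤ -(2 * α)) (hcond2 : β - α > -2)
    (c a b : ℤ) (hc : 0 < c)
    (ha : (a : ℚ) = (c : ℚ) * α) (hb : (b : ℚ) = (c : ℚ) * β)
    (hprim : Int.gcd c (Int.gcd a b) = 1)
    (A : Matrix (Fin 2) (Fin 2) ℚ) (hA : A = !![0, -β; 1, -α])
    (Φ : (Fin 2 → ℚ) → Fin 2 → ℚ)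
    (hΦmem : ∀ x ∈ intSpan A, Φ x ∈ intSpan A)
    (hΦ : ∀ x ∈ intSpan A, ∃ ν : ℤ, 0 ≤ ν ∧ ν ≤ |b| - 1 ∧
      x = digitVec ν + A.mulVec (Φ x))
     :
    ![((-(2 * a - c) : ℤ) : ℚ), ((-(2 * c) : ℤ) : ℚ)] ∈ intSpan A ∧
    ∃ r : ℕ, 1 ≤ r ∧
      Φ^[r] ![((-(2 * a - c) : ℤ) : ℚ), ((-(2 * c) : ℤ) : ℚ)] =
        ![((-(2 * a - c) : ℤ) : ℚ), ((-(2 * c) : ℤ) : ℚ)] := by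
  change A = companion α β at hA
  subst hA
  have hcq : (0 : ℚ) < c := Int.cast_pos.mpr hc
  have h1 : b + c < a := by qify; rw [ha, hb]; nlinarith
  have h2 : 2 * a ≤ b + c := by qify; rw [ha, hb]; nlinarith
  have h3 : -(2 * c) < b - a := by qify; rw [ha, hb]; nlinarith
  have hb_abs : |b| = -b := abs_of_neg (by omega)
  have hβ : β ≠ 0 := by
    rintro rfl
    rw [mul_zero, Int.cast_eq_zero] at hb
    omega
  have hΦ_eq : ∀ x y, x ∈ intSpan (companion α β) → y ∈ intSpan (companion α β) → ∀ ν : ℤ,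
      0 ≤ ν → ν < -b → x = digitVec ν + companion α β *ᵥ y → Φ x = y := by
    intro x y hx hy ν hν hνb hxy
    obtain ⟨ν', hν', hν'b, hx'⟩ := hΦ x hx
    have hb0 : (C c * X ^ 2 + C a * X + C b).coeff 0 = b := by simp
    refine eq_of_digitVec_add_companion_mulVec_eq α β hβ (isPrimitive_of_gcd_eq_one hprim)
      (associated_map_charpoly_companion hc.ne' ha hb) ⟨hν', ?_⟩ ⟨hν, ?_⟩ (hΦmem x hx) hy
      (hx'.symm.trans hxy) <;> rw [hb0] <;> omega
  set x₀ : Fin 2 → ℚ := ![((-(2 * a - c) : ℤ) : ℚ), ((-(2 * c) : ℤ) : ℚ)]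
  set x₁ : Fin 2 → ℚ := ![((a - 2 * c : ℤ) : ℚ), (c : ℚ)]
  have hx₀ : x₀ = digitVec (b + c - 2 * a) + companion α β *ᵥ x₁ := by
    rw [companion_mulVec]
    ext i; fin_cases i <;> simp [x₀, x₁, digitVec] <;> linarith
  have hx₁ : x₁ = digitVec (a - 2 * b - 2 * c) + companion α β *ᵥ x₀ := by
    rw [companion_mulVec]
    ext i; fin_cases i <;> simp [x₀, x₁, digitVec] <;> linarith
  have mem₀ : x₀ ∈ intSpan (companion α β) := vecCons_intCast_mem_intSpan _ _ _
  have mem₁ : x₁ ∈ intSpan (companion α β) := vecCons_intCast_mem_intSpan _ _ _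
  have hΦx₀ : Φ x₀ = x₁ := hΦ_eq x₀ x₁ mem₀ mem₁ _ (by omega) (by omega) hx₀
  have hΦx₁ : Φ x₁ = x₀ := hΦ_eq x₁ x₀ mem₁ mem₀ _ (by omega) (by omega) hx₁
  exact ⟨mem₀, 2, one_le_two, by simp [hΦx₀, hΦx₁]⟩

/-- if `0 < -α < -β - 1`, `-β - 1 ≤ -2α` and `β - α > -2`, then
`-(2a - c, 2c)ᵀ` is a periodic point of `Φ`, i.e. it belongs to the attractor. -/
theorem stmt8 (α β : ℚ) (hα1 : 0 < -α) (hα2 : -α < -β - 1)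
    (hcond1 : -β - 1 ≤ -(2 * α)) (hcond2 : β - α > -2)
    (hirr : Irreducible (X ^ 2 + C α * X + C β : ℚ[X]))
    (hexp : ∀ z : ℂ, z ^ 2 + (α : ℂ) * z + (β : ℂ) = 0 → 1 < ‖z‖)
    (c a b : ℤ) (hc : 0 < c)
    (ha : (a : ℚ) = (c : ℚ) * α) (hb : (b : ℚ) = (c : ℚ) * β)
    (hprim : Int.gcd c (Int.gcd a b) = 1)
    (A : Matrix (Fin 2) (Fin 2) ℚ) (hA : A = !![0, -β; 1, -α])
    (Φ : (Fin 2 → ℚ) → Fin 2 → ℚ)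
    (hΦmem : ∀ x ∈ intSpan A, Φ x ∈ intSpan A)
    (hΦ : ∀ x ∈ intSpan A, ∃ ν : ℤ, 0 ≤ ν ∧ ν ≤ |b| - 1 ∧
      x = digitVec ν + A.mulVec (Φ x))
     :
    ![((-(2 * a - c) : ℤ) : ℚ), ((-(2 * c) : ℤ) : ℚ)] ∈ intSpan A ∧
    ∃ r : ℕ, 1 ≤ r ∧
      Φ^[r] ![((-(2 * a - c) : ℤ) : ℚ), ((-(2 * c) : ℤ) : ℚ)] =
        ![((-(2 * a - c) : ℤ) : ℚ), ((-(2 * c) : ℤ) : ℚ)] :=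
  stmt8_general α β hα2 hcond1 hcond2 c a b hc ha hb hprim A hA Φ hΦmem hΦ
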